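/- arXiv:2511.10514 — 2 statements merged into one kernel-verified Lean document; each statement's English description precedes it below -/
import Mathlib

section
/- Let G be a group and H, K ≤ G subgroups such that H = H₁ × H₂ and K = K₁ × K₂ are internal direct products (each pair of factors commutes elementwise and intersects trivially). Suppose K₁ ≤ H₁ and H₂ ≤ K₂. Then H ∩ K = K₁ × (H₁ ∩ K₂) × H₂ as an internal direct product; i.e., these three subgroups pairwise commute, pairwise intersect trivially, are contained in H ∩ K, and generate H ∩ K. -/
/-!
Write `s ∈ H ∩ K` as `h₁ h₂` with `hᵢ ∈ Hᵢ`. Since `H₂ ≤ K₂ ≤ K`, also `h₁ ∈ K`, so `h₁ = k₁ k₂`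
with `kᵢ ∈ Kᵢ`; since `K₁ ≤ H₁`, also `k₂ ∈ H₁`. Thus `s = k₁ k₂ h₂` with `k₂ ∈ H₁ ∩ K₂`
(Dedekind's modular law, applied once in `H` and once in `K`). Commutation and trivial
intersections are inherited from the two given decompositions.
-/

namespace Subgroup

variable {G : Type*} [Group G]

theorem exists_mul_of_mem_inf_of_le_left {A A₁ A₂ B : Subgroup G}
    (hAgen : ∀ a ∈ A, ∃ x ∈ A₁, ∃ y ∈ A₂, a = x * y) (hA₁B : A₁ ≤ B) :
    ∀ g ∈ B ⊓ A, ∃ x ∈ A₁, ∃ y ∈ B ⊓ A₂, g = x * y := by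
  rintro g ⟨hgB, hgA⟩
  obtain ⟨x, hx, y, hy, rfl⟩ := hAgen g hgA
  have hyB : y ∈ B := (B.mul_mem_cancel_left (hA₁B hx)).1 hgB
  exact ⟨x, hx, y, ⟨hyB, hy⟩, rfl⟩

theorem exists_mul_of_mem_inf_of_le_right {A A₁ A₂ B : Subgroup G}
    (hAgen : ∀ a ∈ A, ∃ x ∈ A₁, ∃ y ∈ A₂, a = x * y) (hA₂B : A₂ ≤ B) :
    ∀ g ∈ A ⊓ B, ∃ x ∈ A₁ ⊓ B, ∃ y ∈ A₂, g = x * y := by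
  rintro g ⟨hgA, hgB⟩
  obtain ⟨x, hx, y, hy, rfl⟩ := hAgen g hgA
  have hxB : x ∈ B := (B.mul_mem_cancel_right (hA₂B hy)).1 hgB
  exact ⟨x, ⟨hx, hxB⟩, y, hy, rfl⟩

end Subgroup

open Subgroup in
/-- If `H = H₁ × H₂` and `K = K₁ × K₂` are internal direct products of subgroups with
`K₁ ≤ H₁` and `H₂ ≤ K₂`, then `H ∩ K = K₁ × (H₁ ∩ K₂) × H₂` as an internal direct product:
the three factors are contained in `H ∩ K`, pairwise commute elementwise, pairwise intersect
trivially, and every element of `H ∩ K` is a product of elements of the three factors. -/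
theorem inter_of_internal_direct_products {G : Type*} [Group G]
    (H H₁ H₂ K K₁ K₂ : Subgroup G)
    (hH₁le : H₁ ≤ H) (hH₂le : H₂ ≤ H)
    (hHcomm : ∀ x ∈ H₁, ∀ y ∈ H₂, x * y = y * x)
    (hHinf : H₁ ⊓ H₂ = ⊥)
    (hHgen : ∀ h ∈ H, ∃ x ∈ H₁, ∃ y ∈ H₂, h = x * y)
    (hK₁le : K₁ ≤ K) (hK₂le : K₂ ≤ K)
    (hKcomm : ∀ x ∈ K₁, ∀ y ∈ K₂, x * y = y * x)
    (hKinf : K₁ ⊓ K₂ = ⊥)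
    (hKgen : ∀ k ∈ K, ∃ x ∈ K₁, ∃ y ∈ K₂, k = x * y)
    (hKH : K₁ ≤ H₁) (hHK : H₂ ≤ K₂) :
    K₁ ≤ H ⊓ K ∧ H₁ ⊓ K₂ ≤ H ⊓ K ∧ H₂ ≤ H ⊓ K ∧
    (∀ x ∈ K₁, ∀ y ∈ H₁ ⊓ K₂, x * y = y * x) ∧
    (∀ x ∈ K₁, ∀ y ∈ H₂, x * y = y * x) ∧
    (∀ x ∈ H₁ ⊓ K₂, ∀ y ∈ H₂, x * y = y * x) ∧
    K₁ ⊓ (H₁ ⊓ K₂) = ⊥ ∧ K₁ ⊓ H₂ = ⊥ ∧ (H₁ ⊓ K₂) ⊓ H₂ = ⊥ ∧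
    (∀ s ∈ H ⊓ K, ∃ x ∈ K₁, ∃ y ∈ H₁ ⊓ K₂, ∃ z ∈ H₂, s = x * y * z) := by
  refine ⟨le_inf (hKH.trans hH₁le) hK₁le, inf_le_inf hH₁le hK₂le,
    le_inf hH₂le (hHK.trans hK₂le),
    fun x hx y hy => hKcomm x hx y hy.2,
    fun x hx y hy => hKcomm x hx y (hHK hy),
    fun x hx y hy => hHcomm x hx.1 y hy,
    le_bot_iff.1 ((inf_le_inf_left K₁ inf_le_right).trans hKinf.le),
    le_bot_iff.1 ((inf_le_inf_left K₁ hHK).trans hKinf.le),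
    le_bot_iff.1 ((inf_le_inf_right H₂ inf_le_left).trans hHinf.le), ?_⟩
  intro s hs
  obtain ⟨h₁, hh₁, z, hz, rfl⟩ :=
    exists_mul_of_mem_inf_of_le_right hHgen (hHK.trans hK₂le) s hs
  obtain ⟨x, hx, y, hy, rfl⟩ := exists_mul_of_mem_inf_of_le_left hKgen hKH h₁ hh₁
  exact ⟨x, hx, y, hy, z, hz, rfl⟩
end

section
/- Let r ≤ n/2 be natural numbers, W ⊆ {1,…,n} with |W| ≤ r, and let R be a uniformly random r-element subset of {1,…,n}∖W. For σ ∈ ℕ, say a set is σ-separated if any two distinct elements differ by at least σ. Then the probability that R is σ-separated is at least 1 − 2σr²/n. -/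
/-! A set `R` that is not `σ`-separated contains some `a` and `a + d` with `1 ≤ d < σ`, and
there are at most `m (σ - 1)` such pairs in the `m`-element ground set `S = {1,…,n} ∖ W`.
A fixed pair lies in a fraction `r (r - 1) / (m (m - 1))` of the `r`-subsets of `S`, so by the
union bound `R` fails to be separated with probability at most `(σ - 1) r (r - 1) / (m - 1)`,
which is at most `2σr²/n` because `m ≥ n - r` and `n ≥ 2r`. -/

open scoped Classical

open Finset

def IsSeparatedBy (σ : ℕ) (R : Finset ℕ) : Prop :=
  ∀ a ∈ R, ∀ b ∈ R, a ≠ b → (σ : ℤ) ≤ |(a : ℤ) - b|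

lemma isSeparatedBy_of_card_le_one {σ : ℕ} {R : Finset ℕ} (hR : #R ≤ 1) :
    IsSeparatedBy σ R :=
  fun a ha b hb hab => absurd (card_le_one.mp hR a ha b hb) hab

lemma exists_add_mem_of_not_isSeparatedBy {σ : ℕ} {R : Finset ℕ} (hR : ¬ IsSeparatedBy σ R) :
    ∃ a ∈ R, ∃ d ∈ Ico 1 σ, a + d ∈ R := by
  simp only [IsSeparatedBy, not_forall, not_le, exists_prop] at hR
  obtain ⟨a, ha, b, hb, hab, hlt⟩ := hR
  rcases lt_or_gt_of_ne hab with h | h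
  · exact ⟨a, ha, b - a, mem_Ico.mpr ⟨by omega, by rw [abs_lt] at hlt; omega⟩,
      by rwa [Nat.add_sub_cancel' h.le]⟩
  · exact ⟨b, hb, a - b, mem_Ico.mpr ⟨by omega, by rw [abs_lt] at hlt; omega⟩,
      by rwa [Nat.add_sub_cancel' h.le]⟩

lemma card_filter_powersetCard_superset_mul_choose_le {α : Type*} [DecidableEq α]
    (S t : Finset α) (r : ℕ) :
    #{R ∈ S.powersetCard r | t ⊆ R} * (#S).choose #t ≤ (#S).choose r * r.choose #t := by
  by_cases ht : t ⊆ S ∧ #t ≤ r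
  · rw [card_filter_powersetCard_subset t S r ht.1 ht.2, Nat.choose_mul ht.2, mul_comm]
  · have : {R ∈ S.powersetCard r | t ⊆ R} = ∅ := by
      refine filter_false_of_mem fun R hR htR => ht ?_
      rw [mem_powersetCard] at hR
      exact ⟨htR.trans hR.1, hR.2 ▸ card_le_card htR⟩
    simp [this]

lemma card_filter_not_isSeparatedBy_mul_choose_two_le (S : Finset ℕ) (r σ : ℕ) :
    #{R ∈ S.powersetCard r | ¬ IsSeparatedBy σ R} * (#S).choose 2
      ≤ #S * (σ - 1) * ((#S).choose r * r.choose 2) := by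
  have hcover : {R ∈ S.powersetCard r | ¬ IsSeparatedBy σ R} ⊆
      (S ×ˢ Ico 1 σ).biUnion fun p => {R ∈ S.powersetCard r | {p.1, p.1 + p.2} ⊆ R} := by
    intro R hR
    rw [mem_filter] at hR
    obtain ⟨a, ha, d, hd, had⟩ := exists_add_mem_of_not_isSeparatedBy hR.2
    have haS : a ∈ S := (mem_powersetCard.mp hR.1).1 ha
    exact mem_biUnion.mpr ⟨(a, d), mem_product.mpr ⟨haS, hd⟩,
      mem_filter.mpr ⟨hR.1, insert_subset ha (singleton_subset_iff.mpr had)⟩⟩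
  have hpair : ∀ p ∈ S ×ˢ Ico 1 σ,
      #{R ∈ S.powersetCard r | {p.1, p.1 + p.2} ⊆ R} * (#S).choose 2
        ≤ (#S).choose r * r.choose 2 := by
    intro p hp
    have hd : 1 ≤ p.2 := (mem_Ico.mp (mem_product.mp hp).2).1
    have := card_filter_powersetCard_superset_mul_choose_le S {p.1, p.1 + p.2} r
    rwa [card_pair (by omega)] at this
  calc #{R ∈ S.powersetCard r | ¬ IsSeparatedBy σ R} * (#S).choose 2
      ≤ (∑ p ∈ S ×ˢ Ico 1 σ, #{R ∈ S.powersetCard r | {p.1, p.1 + p.2} ⊆ R})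
          * (#S).choose 2 :=
        Nat.mul_le_mul_right _ ((card_le_card hcover).trans card_biUnion_le)
    _ ≤ #(S ×ˢ Ico 1 σ) * ((#S).choose r * r.choose 2) := by
        rw [sum_mul]; exact sum_le_card_nsmul _ _ _ hpair
    _ = #S * (σ - 1) * ((#S).choose r * r.choose 2) := by
        rw [card_product, Nat.card_Ico]

lemma mul_le_of_mul_choose_two_le {b T m n r s : ℕ} (hm : 2 ≤ m) (hrn : 2 * r ≤ n)
    (hnm : n ≤ m + r) (h : b * m.choose 2 ≤ m * s * (T * r.choose 2)) :
    (b : ℚ) * n ≤ 2 * s * r ^ 2 * T := by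
  have hm' : (2 : ℚ) ≤ m := by exact_mod_cast hm
  have hrn' : 2 * (r : ℚ) ≤ n := by exact_mod_cast hrn
  have hnm' : (n : ℚ) ≤ m + r := by exact_mod_cast hnm
  have hb : (b : ℚ) * (m - 1) ≤ s * T * (r * (r - 1)) := by
    have h' : (b : ℚ) * (m * (m - 1) / 2) ≤ m * s * (T * (r * (r - 1) / 2)) := by
      simpa only [Nat.cast_mul, Nat.cast_choose_two] using (Nat.cast_le (α := ℚ)).mpr h
    nlinarith
  -- `2r(m - 1) - (r - 1)n ≥ (r + 1)(n - 2r)` since `m ≥ n - r`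
  have hrm : ((r : ℚ) - 1) * n ≤ 2 * r * (m - 1) := by nlinarith
  refine le_of_mul_le_mul_right ?_ (by linarith : (0 : ℚ) < m - 1)
  calc (b : ℚ) * n * (m - 1) = n * (b * (m - 1)) := by ring
    _ ≤ n * (s * T * (r * (r - 1))) := by gcongr
    _ = s * T * r * ((r - 1) * n) := by ring
    _ ≤ s * T * r * (2 * r * (m - 1)) := by gcongr
    _ = 2 * s * r ^ 2 * T * (m - 1) := by ring

lemma card_filter_not_isSeparatedBy_div_le (S : Finset ℕ) {n r : ℕ} (σ : ℕ)
    (hrn : 2 * r ≤ n) (hnS : n ≤ #S + r) :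
    (#{R ∈ S.powersetCard r | ¬ IsSeparatedBy σ R} : ℚ) / #(S.powersetCard r)
      ≤ 2 * σ * r ^ 2 / n := by
  obtain hr | hr := le_or_gt r 1
  · have hempty : {R ∈ S.powersetCard r | ¬ IsSeparatedBy σ R} = ∅ :=
      filter_false_of_mem fun R hR =>
        not_not_intro (isSeparatedBy_of_card_le_one ((mem_powersetCard.mp hR).2.trans_le hr))
    rw [hempty, card_empty, Nat.cast_zero, zero_div]
    positivity
  have hT : (0 : ℚ) < #(S.powersetCard r) := by
    rw [card_powersetCard]; exact_mod_cast Nat.choose_pos (by omega)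
  rw [div_le_div_iff₀ hT (by norm_cast; omega), card_powersetCard]
  calc _ ≤ 2 * ((σ - 1 : ℕ) : ℚ) * r ^ 2 * (#S).choose r :=
        mul_le_of_mul_choose_two_le (by omega) hrn hnS
          (card_filter_not_isSeparatedBy_mul_choose_two_le S r σ)
    _ ≤ _ := by gcongr; exact_mod_cast Nat.sub_le σ 1

lemma card_filter_div_card_eq_one_sub {α : Type*} {s : Finset α} (hs : s.Nonempty)
    (p : α → Prop) [DecidablePred p] :
    (#{x ∈ s | p x} : ℚ) / #s = 1 - #{x ∈ s | ¬ p x} / #s := by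
  rw [eq_sub_iff_add_eq, ← add_div, ← Nat.cast_add, card_filter_add_card_filter_not,
    div_self (by exact_mod_cast hs.card_pos.ne')]

/-- A uniformly random `r`-subset `R` of `{1,…,n} ∖ W` (where `|W| ≤ r` and `r ≤ n/2`)
is `σ`-separated (any two distinct elements differ by at least `σ`) with probability at
least `1 − 2σr²/n`, expressed as a ratio of counts. -/
theorem random_subset_separated (n r σ : ℕ) (hr : 2 * r ≤ n)
    (W : Finset ℕ) (hW : W ⊆ Finset.Icc 1 n) (hWcard : W.card ≤ r) :
    (1 : ℚ) - 2 * σ * r ^ 2 / n ≤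
      ((((Finset.Icc 1 n \ W).powersetCard r).filter
          (fun R => ∀ a : ℕ, a ∈ R → ∀ b : ℕ, b ∈ R → a ≠ b →
            (σ : ℤ) ≤ |(a : ℤ) - (b : ℤ)|)).card : ℚ)
        / (((Finset.Icc 1 n \ W).powersetCard r).card : ℚ) := by
  set S := Icc 1 n \ W
  have hnS : n ≤ #S + r := by
    rw [card_sdiff_of_subset hW, Nat.card_Icc]; omega
  have hT : (S.powersetCard r).Nonempty := powersetCard_nonempty.mpr (by omega)
  rw [card_filter_div_card_eq_one_sub hT]
  convert sub_le_sub_left (card_filter_not_isSeparatedBy_div_le S σ hr hnS) 1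
  exact Iff.rfl
end
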